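/- arXiv:1411.5117 — 2 statements merged into one kernel-verified Lean document; each statement's English description precedes it below -/
import Mathlib

section
/- Let L > 0, let μ : [0, L] → ℝ be continuous with μ(t) ≤ 0 for all t ∈ [0, L], and let s : [0, L] → ℝ be twice continuously differentiable with s''(t) + μ(t) s(t) = 0 on [0, L], s(0) = 0, and s'(0) = 1. Then s'(t) ≥ 1 and s(t) ≥ t for all t ∈ [0, L]; in particular s(t) > 0 for all t ∈ (0, L]. -/
/-!
Since `s'' = -μ s` with `-μ ≥ 0`, we have `(s s')' = s'² - μ s² ≥ 0`, so `s s' ≥ 0` because it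
vanishes at `0`. Then `(s'²)' = -2 μ s s' ≥ 0`, so `s'² ≥ 1`: the continuous function `s'` never
enters `(-1, 1)` and starts at `1`, hence `s' ≥ 1`, and integrating gives `s(t) ≥ t`.
-/

open Set

lemma monotoneOn_of_forall_hasDerivWithinAt_nonneg {D : Set ℝ} (hD : Convex ℝ D)
    {f f' : ℝ → ℝ} (hf : ∀ x ∈ D, HasDerivWithinAt f (f' x) D x) (hf' : ∀ x ∈ D, 0 ≤ f' x) :
    MonotoneOn f D :=
  monotoneOn_of_hasDerivWithinAt_nonneg hD (fun x hx => (hf x hx).continuousWithinAt)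
    (fun x hx => (hf x (interior_subset hx)).mono interior_subset)
    (fun x hx => hf' x (interior_subset hx))

lemma one_le_of_continuousOn_Icc_of_one_le_sq {a b : ℝ} {g : ℝ → ℝ}
    (hg : ContinuousOn g (Icc a b)) (ha : g a = 1) (hsq : ∀ x ∈ Icc a b, 1 ≤ g x ^ 2) :
    ∀ x ∈ Icc a b, 1 ≤ g x := by
  intro x hx
  by_contra! hlt
  have hneg : g x < 0 := by nlinarith [hsq x hx]
  obtain ⟨y, hy, hy0⟩ : (0 : ℝ) ∈ g '' Icc a x :=
    intermediate_value_Icc' hx.1 (hg.mono (Icc_subset_Icc_right hx.2)) ⟨hneg.le, by linarith⟩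
  have := hsq y ⟨hy.1, hy.2.trans hx.2⟩
  norm_num [hy0] at this

section Jacobi

variable {a b : ℝ} {μ s s' s'' : ℝ → ℝ}

lemma monotoneOn_mul_deriv_of_nonpos (hμ : ∀ t ∈ Icc a b, μ t ≤ 0)
    (hs : ∀ t ∈ Icc a b, HasDerivWithinAt s (s' t) (Icc a b) t)
    (hs' : ∀ t ∈ Icc a b, HasDerivWithinAt s' (s'' t) (Icc a b) t)
    (hode : ∀ t ∈ Icc a b, s'' t + μ t * s t = 0) :
    MonotoneOn (fun t => s t * s' t) (Icc a b) := by
  refine monotoneOn_of_forall_hasDerivWithinAt_nonneg (convex_Icc a b)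
    (fun t ht => (hs t ht).mul (hs' t ht)) fun t ht => ?_
  have hs'' : s'' t = -(μ t * s t) := by linarith [hode t ht]
  rw [hs'']
  nlinarith [hμ t ht, sq_nonneg (s t), sq_nonneg (s' t)]

lemma monotoneOn_deriv_sq_of_nonpos (hμ : ∀ t ∈ Icc a b, μ t ≤ 0)
    (hs' : ∀ t ∈ Icc a b, HasDerivWithinAt s' (s'' t) (Icc a b) t)
    (hode : ∀ t ∈ Icc a b, s'' t + μ t * s t = 0) (hss' : ∀ t ∈ Icc a b, 0 ≤ s t * s' t) :
    MonotoneOn (fun t => s' t ^ 2) (Icc a b) := by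
  refine monotoneOn_of_forall_hasDerivWithinAt_nonneg (convex_Icc a b)
    (fun t ht => (hs' t ht).pow 2) fun t ht => ?_
  have hs'' : s'' t = -(μ t * s t) := by linarith [hode t ht]
  norm_num [hs'']
  nlinarith [hμ t ht, hss' t ht]

end Jacobi

theorem jacobi_comparison_nonpos_curvature_general (L : ℝ)
    (μ s s' s'' : ℝ → ℝ)
    (hμ : ∀ t ∈ Icc 0 L, μ t ≤ 0)
    (hs : ∀ t ∈ Icc 0 L, HasDerivWithinAt s (s' t) (Icc 0 L) t)
    (hs' : ∀ t ∈ Icc 0 L, HasDerivWithinAt s' (s'' t) (Icc 0 L) t)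
    (hode : ∀ t ∈ Icc 0 L, s'' t + μ t * s t = 0)
    (h0 : s 0 = 0) (h1 : s' 0 = 1) :
    (∀ t ∈ Icc 0 L, 1 ≤ s' t ∧ t ≤ s t) ∧ (∀ t ∈ Ioc 0 L, 0 < s t) := by
  have hss' : ∀ t ∈ Icc 0 L, 0 ≤ s t * s' t := fun t ht => by
    simpa [h0] using
      monotoneOn_mul_deriv_of_nonpos hμ hs hs' hode ⟨le_rfl, ht.1.trans ht.2⟩ ht ht.1
  have hsq : ∀ t ∈ Icc 0 L, 1 ≤ s' t ^ 2 := fun t ht => by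
    simpa [h1] using
      monotoneOn_deriv_sq_of_nonpos hμ hs' hode hss' ⟨le_rfl, ht.1.trans ht.2⟩ ht ht.1
  have hs'_ge : ∀ t ∈ Icc 0 L, 1 ≤ s' t := one_le_of_continuousOn_Icc_of_one_le_sq
    (fun t ht => (hs' t ht).continuousWithinAt) h1 hsq
  have hs_sub : MonotoneOn (fun t => s t - t) (Icc 0 L) :=
    monotoneOn_of_forall_hasDerivWithinAt_nonneg (convex_Icc 0 L)
      (fun t ht => (hs t ht).sub (hasDerivWithinAt_id t _)) fun t ht => by
        linarith [hs'_ge t ht]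
  have hs_ge : ∀ t ∈ Icc 0 L, t ≤ s t := fun t ht => by
    linarith [hs_sub ⟨le_rfl, ht.1.trans ht.2⟩ ht ht.1, h0]
  exact ⟨fun t ht => ⟨hs'_ge t ht, hs_ge t ht⟩,
    fun t ht => ht.1.trans_le (hs_ge t (Ioc_subset_Icc_self ht))⟩

theorem jacobi_comparison_nonpos_curvature (L : ℝ) (hL : 0 < L)
    (μ s s' s'' : ℝ → ℝ)
    (hμc : ContinuousOn μ (Icc 0 L))
    (hμ : ∀ t ∈ Icc 0 L, μ t ≤ 0)
    (hs : ∀ t ∈ Icc 0 L, HasDerivWithinAt s (s' t) (Icc 0 L) t)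
    (hs' : ∀ t ∈ Icc 0 L, HasDerivWithinAt s' (s'' t) (Icc 0 L) t)
    (hs''c : ContinuousOn s'' (Icc 0 L))
    (hode : ∀ t ∈ Icc 0 L, s'' t + μ t * s t = 0)
    (h0 : s 0 = 0) (h1 : s' 0 = 1) :
    (∀ t ∈ Icc 0 L, 1 ≤ s' t ∧ t ≤ s t) ∧ (∀ t ∈ Ioc 0 L, 0 < s t) :=
  jacobi_comparison_nonpos_curvature_general L μ s s' s'' hμ hs hs' hode h0 h1
end

section
/- Let a ∈ ℝ and let q : [a, a+2] → ℝ be differentiable with q(t) > 0 and q'(t) ≥ 1/2 − q(t)² for all t ∈ [a, a+2]. Then q(a+2) ≥ 1/2. -/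
/-! The line `t ↦ (t - a) / 4` is a lower fence for `q`: it starts below `q a > 0`, and wherever
it touches `q` before time `a + 2` we have `q < 1 / 2`, so `q' ≥ 1 / 2 - q ^ 2 > 1 / 4`, which
is the slope of the fence. Hence `q (a + 2)` lies above the fence's final value `1 / 2`. -/

open Set

theorem le_image_of_deriv_boundary_lt_deriv {f f' B B' : ℝ → ℝ} {a b : ℝ}
    (hf : ∀ x ∈ Icc a b, HasDerivWithinAt f (f' x) (Icc a b) x)
    (hB : ∀ x, HasDerivAt B (B' x) x) (ha : B a ≤ f a)
    (bound : ∀ x ∈ Ico a b, f x = B x → B' x < f' x) :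
    ∀ ⦃x⦄, x ∈ Icc a b → B x ≤ f x := by
  intro x hx
  have hcont : ContinuousOn (-f) (Icc a b) := fun y hy => (hf y hy).continuousWithinAt.neg
  have hderiv : ∀ y ∈ Ico a b, HasDerivWithinAt (-f) (-f' y) (Ici y) y := fun y hy =>
    ((hf y (Ico_subset_Icc_self hy)).mono_of_mem_nhdsWithin (Icc_mem_nhdsGE_of_mem hy)).neg
  exact neg_le_neg_iff.mp <|
    image_le_of_deriv_right_lt_deriv_boundary hcont hderiv (B := -B) (B' := -B')
      (neg_le_neg ha) (fun y => (hB y).neg)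
      (fun y hy hfy => neg_lt_neg (bound y hy (neg_inj.mp hfy))) hx

theorem riccati_inequality_lower_bound (a : ℝ) (q q' : ℝ → ℝ)
    (hq : ∀ t ∈ Icc a (a + 2), HasDerivWithinAt q (q' t) (Icc a (a + 2)) t)
    (hpos : ∀ t ∈ Icc a (a + 2), 0 < q t)
    (hineq : ∀ t ∈ Icc a (a + 2), 1 / 2 - q t ^ 2 ≤ q' t) :
    1 / 2 ≤ q (a + 2) := by
  have hfence : ∀ t, HasDerivAt (fun t => (t - a) / 4) (1 / 4) t := fun t =>
    ((hasDerivAt_id t).sub_const a).div_const 4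
  have hstart : (a - a) / 4 ≤ q a := by
    simpa using (hpos a (left_mem_Icc.mpr (by linarith))).le
  have hslope : ∀ t ∈ Ico a (a + 2), q t = (t - a) / 4 → 1 / 4 < q' t := by
    rintro t ⟨hat, hta⟩ hqt
    have hq_sq : q t ^ 2 < 1 / 4 := by rw [hqt]; nlinarith
    linarith [hineq t ⟨hat, hta.le⟩]
  have hend := le_image_of_deriv_boundary_lt_deriv hq hfence hstart hslope
    (right_mem_Icc.mpr (by linarith))
  linarith
end
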